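/- Optimal robust regret for multi-period ordering with predictions: let an RMOwP instance satisfy d̄₀ ≤ V_1 + … + V_T, and set Γ* = (c·(p−c)/p)·max_{t ∈ {1,…,T}} (Δ_t − Σ_{s=t+1}^{T} V_s). Then: (i) for every Γ ∈ ℝ, there exists an ordering policy π with Reg_π ≤ Γ if and only if Γ ≥ Γ*; (ii) the ordering policy π* defined by π*_t([a,b], x) = max(0, min(V_t, Γ*/c + a − x)) satisfies Reg_{π*} = Γ*. In particular, the minimum over all ordering policies of the robust regret equals Γ* and is attained by π*. -/
import Mathlib


/-- An instance of the robust multi-period ordering with predictions (RMOwP) problem. -/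
structure RMOwP where
  /-- number of preparation days -/
  T : ℕ
  /-- left endpoint of the initial prediction interval -/
  dlo : ℝ
  /-- right endpoint of the initial prediction interval -/
  dhi : ℝ
  /-- prediction-error upper bounds -/
  Δ : ℕ → ℝ
  /-- per-unit ordering cost -/
  c : ℝ
  /-- per-unit revenue -/
  p : ℝ
  /-- daily supply capacities -/
  Vcap : ℕ → ℝ

namespace RMOwP

variable (J : RMOwP)

/-- The structural hypotheses on an RMOwP instance. -/
def IsValid : Prop :=
  1 ≤ J.T ∧ 0 ≤ J.dlo ∧ J.dlo ≤ J.dhi ∧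
  (∀ t, 1 ≤ t → t + 1 ≤ J.T → J.Δ (t + 1) ≤ J.Δ t) ∧
  (∀ t, 1 ≤ t → t ≤ J.T → 0 ≤ J.Δ t) ∧
  J.Δ 1 ≤ J.dhi - J.dlo ∧
  0 < J.c ∧ J.c < J.p ∧
  (∀ t, 1 ≤ t → t ≤ J.T → 0 ≤ J.Vcap t)

/-- An admissible scenario: a regular prediction sequence `([lo_t, hi_t])_{t=1}^T` together
with a demand `d ∈ [lo_T, hi_T]`. -/
def Scenario (lo hi : ℕ → ℝ) (d : ℝ) : Prop :=
  J.dlo ≤ lo 1 ∧ hi 1 ≤ J.dhi ∧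
  (∀ t, 1 ≤ t → t ≤ J.T → lo t ≤ hi t ∧ hi t - lo t ≤ J.Δ t) ∧
  (∀ t, 2 ≤ t → t ≤ J.T → lo (t - 1) ≤ lo t ∧ hi t ≤ hi (t - 1)) ∧
  lo J.T ≤ d ∧ d ≤ hi J.T

/-- An ordering policy: its action lies in `[0, V_t]` whenever the input interval has
length at most `Δ_t`.  The first two real arguments are the endpoints of the interval,
the third is the current inventory level. -/
def IsPolicy (π : ℕ → ℝ → ℝ → ℝ → ℝ) : Prop :=
  ∀ t a b x, 1 ≤ t → t ≤ J.T → a ≤ b → b - a ≤ J.Δ t →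
    0 ≤ π t a b x ∧ π t a b x ≤ J.Vcap t

/-- The inventory levels produced by a decision rule `π` along a prediction sequence:
`x_1 = 0` and `x_{t+1} = x_t + π_t([lo_t, hi_t], x_t)`. -/
noncomputable def inv (π : ℕ → ℝ → ℝ → ℝ → ℝ) (lo hi : ℕ → ℝ) : ℕ → ℝ
  | 0 => 0
  | t + 1 => if t = 0 then 0 else inv π lo hi t + π t (lo t) (hi t) (inv π lo hi t)

/-- The total supply capacity `V_1 + … + V_T`. -/
noncomputable def totalCap : ℝ := ∑ t ∈ Finset.Icc 1 J.T, J.Vcap t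

/-- The profit of a policy on a given scenario. -/
noncomputable def profit (π : ℕ → ℝ → ℝ → ℝ → ℝ) (lo hi : ℕ → ℝ) (d : ℝ) : ℝ :=
  J.p * min d (inv π lo hi (J.T + 1)) - J.c * inv π lo hi (J.T + 1)

/-- The hindsight-optimal profit. -/
noncomputable def hindsight (d : ℝ) : ℝ := (J.p - J.c) * min J.totalCap d

/-- The robust regret of a policy: the supremum over admissible scenarios of the difference
between the hindsight-optimal profit and the policy's profit. -/
noncomputable def regret (π : ℕ → ℝ → ℝ → ℝ → ℝ) : ℝ :=
  sSup {r | ∃ lo hi d, J.Scenario lo hi d ∧ r = J.hindsight d - J.profit π lo hi d}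

/-- The robust competitive ratio of a policy: the infimum over admissible scenarios of the
ratio between the policy's profit and the hindsight-optimal profit. -/
noncomputable def ratio (π : ℕ → ℝ → ℝ → ℝ → ℝ) : ℝ :=
  sInf {r | ∃ lo hi d, J.Scenario lo hi d ∧ r = J.profit π lo hi d / J.hindsight d}

end RMOwP

namespace RMOwP

/-- `Γ* = (c·(p−c)/p) · max_{t ∈ {1,…,T}} (Δ_t − Σ_{s=t+1}^{T} V_s)`. -/
noncomputable def GammaStar (J : RMOwP) : ℝ :=
  (J.c * (J.p - J.c) / J.p) *
    sSup ((fun t => J.Δ t - ∑ s ∈ Finset.Icc (t + 1) J.T, J.Vcap s) '' Set.Icc 1 J.T)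

end RMOwP
namespace RMOwP

variable {J : RMOwP}

lemma inv_zero (π : ℕ → ℝ → ℝ → ℝ → ℝ) (lo hi : ℕ → ℝ) : inv π lo hi 0 = 0 := rfl

lemma inv_one (π : ℕ → ℝ → ℝ → ℝ → ℝ) (lo hi : ℕ → ℝ) : inv π lo hi 1 = 0 := by
  simp [inv]

lemma inv_succ (π : ℕ → ℝ → ℝ → ℝ → ℝ) (lo hi : ℕ → ℝ) {t : ℕ} (ht : 1 ≤ t) :
    inv π lo hi (t + 1) = inv π lo hi t + π t (lo t) (hi t) (inv π lo hi t) := by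
  rw [inv, if_neg (by omega)]

lemma inv_congr (π : ℕ → ℝ → ℝ → ℝ → ℝ) {lo1 hi1 lo2 hi2 : ℕ → ℝ} :
    ∀ t, (∀ s, 1 ≤ s → s < t → lo1 s = lo2 s ∧ hi1 s = hi2 s) →
      inv π lo1 hi1 t = inv π lo2 hi2 t
  | 0, _ => rfl
  | 1, _ => by simp [inv]
  | (t+2), h => by
    rw [inv_succ π lo1 hi1 (by omega), inv_succ π lo2 hi2 (by omega),
      inv_congr π (t+1) (fun s hs hst => h s hs (by omega)),
      (h (t+1) (by omega) (by omega)).1, (h (t+1) (by omega) (by omega)).2]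

end RMOwP
namespace RMOwP

variable {J : RMOwP}

lemma scen_mono {lo hi : ℕ → ℝ} {d : ℝ} (h : J.Scenario lo hi d) :
    ∀ {s t : ℕ}, 1 ≤ s → s ≤ t → t ≤ J.T → lo s ≤ lo t ∧ hi t ≤ hi s := by
  intro s t hs hst ht
  induction t with
  | zero => omega
  | succ n ih =>
    rcases Nat.lt_or_ge s (n + 1) with h' | h'
    · have h2 := h.2.2.2.1 (n + 1) (by omega) ht
      simp only [Nat.add_sub_cancel] at h2
      have h3 := ih (by omega) (by omega)
      exact ⟨h3.1.trans h2.1, h2.2.trans h3.2⟩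
    · have : s = n + 1 := by omega
      subst this; exact ⟨le_rfl, le_rfl⟩

lemma delta_mono (hJ : J.IsValid) : ∀ {s t : ℕ}, 1 ≤ s → s ≤ t → t ≤ J.T → J.Δ t ≤ J.Δ s := by
  intro s t hs hst ht
  induction t with
  | zero => omega
  | succ n ih =>
    rcases Nat.lt_or_ge s (n + 1) with h' | h'
    · have h2 := hJ.2.2.2.1 n (by omega) ht
      exact h2.trans (ih (by omega) (by omega))
    · have : s = n + 1 := by omega
      subst this; exact le_rfl

lemma inv_between {π : ℕ → ℝ → ℝ → ℝ → ℝ} {lo hi : ℕ → ℝ} {d : ℝ}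
    (hπ : J.IsPolicy π) (h : J.Scenario lo hi d) :
    ∀ {s t : ℕ}, s ≤ t → t ≤ J.T →
      inv π lo hi (s + 1) ≤ inv π lo hi (t + 1) ∧
      inv π lo hi (t + 1) ≤ inv π lo hi (s + 1) + ∑ u ∈ Finset.Icc (s + 1) t, J.Vcap u := by
  intro s t hst ht
  induction t with
  | zero =>
    have : s = 0 := by omega
    subst this; simp
  | succ n ih =>
    rcases Nat.lt_or_ge s (n + 1) with h' | h'
    · have hsn := ih (by omega) (by omega)
      have hiv := h.2.2.1 (n + 1) (by omega) ht
      have hb := hπ (n + 1) (lo (n + 1)) (hi (n + 1)) (inv π lo hi (n + 1))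
        (by omega) ht hiv.1 hiv.2
      rw [inv_succ π lo hi (show 1 ≤ n + 1 by omega)]
      rw [Finset.sum_Icc_succ_top (show s + 1 ≤ n + 1 by omega)]
      constructor <;> linarith [hsn.1, hsn.2, hb.1, hb.2]
    · have : s = n + 1 := by omega
      subst this; simp

lemma inv_bounds {π : ℕ → ℝ → ℝ → ℝ → ℝ} {lo hi : ℕ → ℝ} {d : ℝ}
    (hπ : J.IsPolicy π) (h : J.Scenario lo hi d) {t : ℕ} (ht : t ≤ J.T) :
    0 ≤ inv π lo hi (t + 1) ∧ inv π lo hi (t + 1) ≤ ∑ u ∈ Finset.Icc 1 t, J.Vcap u := by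
  have := inv_between hπ h (show 0 ≤ t by omega) ht
  rw [inv_one] at this
  simpa using this

end RMOwP
namespace RMOwP

variable {J : RMOwP}

/-- The quantity whose max defines `Γ*`. -/
noncomputable def Mval (J : RMOwP) : ℝ :=
  sSup ((fun t => J.Δ t - ∑ s ∈ Finset.Icc (t + 1) J.T, J.Vcap s) '' Set.Icc 1 J.T)

lemma gammaStar_eq (J : RMOwP) : J.GammaStar = (J.c * (J.p - J.c) / J.p) * J.Mval := rfl

lemma Mval_mem (hJ : J.IsValid) :
    ∃ t, 1 ≤ t ∧ t ≤ J.T ∧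
      J.Mval = J.Δ t - ∑ s ∈ Finset.Icc (t + 1) J.T, J.Vcap s := by
  have hne : ((fun t => J.Δ t - ∑ s ∈ Finset.Icc (t + 1) J.T, J.Vcap s) '' Set.Icc 1 J.T).Nonempty :=
    ⟨_, ⟨1, ⟨le_rfl, hJ.1⟩, rfl⟩⟩
  have hfin : ((fun t => J.Δ t - ∑ s ∈ Finset.Icc (t + 1) J.T, J.Vcap s) '' Set.Icc 1 J.T).Finite :=
    (Set.finite_Icc _ _).image _
  obtain ⟨t, ⟨ht1, ht2⟩, hM⟩ := hne.csSup_mem hfin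
  exact ⟨t, ht1, ht2, hM.symm⟩

lemma le_Mval {t : ℕ} (ht1 : 1 ≤ t) (ht2 : t ≤ J.T) :
    J.Δ t - ∑ s ∈ Finset.Icc (t + 1) J.T, J.Vcap s ≤ J.Mval := by
  have hfin : ((fun t => J.Δ t - ∑ s ∈ Finset.Icc (t + 1) J.T, J.Vcap s) '' Set.Icc 1 J.T).Finite :=
    (Set.finite_Icc _ _).image _
  exact le_csSup hfin.bddAbove ⟨t, ⟨ht1, ht2⟩, rfl⟩

lemma Mval_nonneg (hJ : J.IsValid) : 0 ≤ J.Mval := by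
  have h := le_Mval (J := J) hJ.1 le_rfl
  rw [Finset.Icc_eq_empty (by omega)] at h
  simp only [Finset.sum_empty, sub_zero] at h
  exact (hJ.2.2.2.2.1 J.T hJ.1 le_rfl).trans h

lemma kappa_pos (hJ : J.IsValid) : 0 < J.c * (J.p - J.c) / J.p := by
  have hc := hJ.2.2.2.2.2.2.1
  have hcp := hJ.2.2.2.2.2.2.2.1
  exact div_pos (mul_pos hc (by linarith)) (hc.trans hcp)

lemma gammaStar_nonneg (hJ : J.IsValid) : 0 ≤ J.GammaStar := by
  rw [gammaStar_eq]
  exact mul_nonneg (kappa_pos hJ).le (Mval_nonneg hJ)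

lemma gamma_eq (hJ : J.IsValid) : J.GammaStar / J.c = (J.p - J.c) / J.p * J.Mval := by
  have hc := hJ.2.2.2.2.2.2.1
  have hp : (0:ℝ) < J.p := hc.trans hJ.2.2.2.2.2.2.2.1
  rw [gammaStar_eq]
  field_simp

lemma gamma_le_Mval (hJ : J.IsValid) : J.GammaStar / J.c ≤ J.Mval := by
  rw [gamma_eq hJ]
  have hc := hJ.2.2.2.2.2.2.1
  have hcp := hJ.2.2.2.2.2.2.2.1
  have hp : 0 < J.p := hc.trans hcp
  have hM := Mval_nonneg hJ
  rw [div_mul_eq_mul_div, div_le_iff₀ hp]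
  nlinarith

lemma gamma_nonneg (hJ : J.IsValid) : 0 ≤ J.GammaStar / J.c :=
  div_nonneg (gammaStar_nonneg hJ) hJ.2.2.2.2.2.2.1.le

/-- The trivial constant scenario. -/
lemma scen_const (hJ : J.IsValid) :
    J.Scenario (fun _ => J.dlo) (fun _ => J.dlo) J.dlo := by
  refine ⟨le_rfl, hJ.2.2.1, fun t ht1 ht2 => ⟨le_rfl, ?_⟩, fun t _ _ => ⟨le_rfl, le_rfl⟩,
    le_rfl, le_rfl⟩
  simpa using hJ.2.2.2.2.1 t ht1 ht2

lemma regretSet_bddAbove {π : ℕ → ℝ → ℝ → ℝ → ℝ} (hJ : J.IsValid) (hπ : J.IsPolicy π) :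
    BddAbove {r | ∃ lo hi d, J.Scenario lo hi d ∧ r = J.hindsight d - J.profit π lo hi d} := by
  have hc := hJ.2.2.2.2.2.2.1
  have hcp := hJ.2.2.2.2.2.2.2.1
  refine ⟨(J.p - J.c) * J.dhi + J.c * J.totalCap, ?_⟩
  rintro r ⟨lo, hi, d, hs, rfl⟩
  have hx := inv_bounds hπ hs (le_rfl : J.T ≤ J.T)
  have hm := scen_mono hs (le_rfl : 1 ≤ 1) hJ.1 le_rfl
  have hd1 : 0 ≤ d := le_trans (le_trans hJ.2.1 (hs.1.trans hm.1)) hs.2.2.2.2.1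
  have hd2 : d ≤ J.dhi := le_trans hs.2.2.2.2.2 (hm.2.trans hs.2.1)
  have hx2 : inv π lo hi (J.T + 1) ≤ J.totalCap := hx.2
  have hmin1 : min J.totalCap d ≤ d := min_le_right _ _
  have hmin2 : 0 ≤ min d (inv π lo hi (J.T + 1)) := le_min hd1 hx.1
  rw [hindsight, profit]
  nlinarith [hx.1]

end RMOwP
namespace RMOwP

variable {J : RMOwP}

lemma pistar_policy (hJ : J.IsValid) :
    J.IsPolicy (fun t a _ x => max 0 (min (J.Vcap t) (J.GammaStar / J.c + a - x))) :=
  fun t _ _ _ ht1 ht2 _ _ =>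
    ⟨le_max_left _ _, max_le (hJ.2.2.2.2.2.2.2.2 t ht1 ht2) (min_le_left _ _)⟩

lemma pistar_step (J : RMOwP) (lo hi : ℕ → ℝ) {t : ℕ} (ht : 1 ≤ t) :
    inv (fun t a _ x => max 0 (min (J.Vcap t) (J.GammaStar / J.c + a - x))) lo hi (t + 1)
      = inv (fun t a _ x => max 0 (min (J.Vcap t) (J.GammaStar / J.c + a - x))) lo hi t
        + max 0 (min (J.Vcap t) (J.GammaStar / J.c + lo t
            - inv (fun t a _ x => max 0 (min (J.Vcap t) (J.GammaStar / J.c + a - x))) lo hi t)) :=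
  inv_succ _ lo hi ht

lemma pistar_claim1 (hJ : J.IsValid) {lo hi : ℕ → ℝ} {d : ℝ} (h : J.Scenario lo hi d) :
    ∀ t, 1 ≤ t → t ≤ J.T →
      inv (fun t a _ x => max 0 (min (J.Vcap t) (J.GammaStar / J.c + a - x))) lo hi (t + 1)
        ≤ lo t + J.GammaStar / J.c := by
  intro t
  induction t with
  | zero => omega
  | succ n ih =>
    intro _ hT
    rw [pistar_step J lo hi (by omega)]
    rcases Nat.eq_zero_or_pos n with h0 | h0
    · subst h0
      rw [inv_one]
      have hlo1 : 0 ≤ lo 1 := hJ.2.1.trans h.1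
      have hγ := gamma_nonneg hJ
      have h2 : min (J.Vcap 1) (J.GammaStar / J.c + lo 1 - 0) ≤ lo 1 + J.GammaStar / J.c := by
        have := min_le_right (J.Vcap 1) (J.GammaStar / J.c + lo 1 - 0); linarith
      have h3 : (0:ℝ) ≤ lo 1 + J.GammaStar / J.c := by linarith
      linarith [max_le h3 h2]
    · have ihn := ih h0 (by omega)
      have hmono := (scen_mono h h0 (Nat.le_succ n) hT).1
      set x := inv (fun t a _ x => max 0 (min (J.Vcap t) (J.GammaStar / J.c + a - x))) lo hi (n + 1) with hx
      rcases le_total (J.GammaStar / J.c + lo (n + 1) - x) 0 with hz | hz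
      · rw [max_eq_left ((min_le_right _ _).trans hz)]
        linarith
      · have hmax : max 0 (min (J.Vcap (n + 1)) (J.GammaStar / J.c + lo (n + 1) - x))
            ≤ J.GammaStar / J.c + lo (n + 1) - x := max_le hz (min_le_right _ _)
        linarith

lemma pistar_claim2 (hJ : J.IsValid) (hcap : J.dhi ≤ J.totalCap)
    {lo hi : ℕ → ℝ} {d : ℝ} (h : J.Scenario lo hi d) :
    ∀ t, t ≤ J.T →
      hi J.T + J.GammaStar / J.c - J.Mval
        ≤ inv (fun t a _ x => max 0 (min (J.Vcap t) (J.GammaStar / J.c + a - x))) lo hi (t + 1)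
          + ∑ s ∈ Finset.Icc (t + 1) J.T, J.Vcap s := by
  intro t
  induction t with
  | zero =>
    intro _
    rw [inv_one]
    have hhi : hi J.T ≤ hi 1 := (scen_mono h le_rfl hJ.1 le_rfl).2
    have hγ := gamma_le_Mval hJ
    have : (∑ s ∈ Finset.Icc (0 + 1) J.T, J.Vcap s) = J.totalCap := rfl
    rw [this]
    linarith [h.2.1]
  | succ n ih =>
    intro hT
    have ihn := ih (by omega)
    rw [pistar_step J lo hi (by omega)]
    set x := inv (fun t a _ x => max 0 (min (J.Vcap t) (J.GammaStar / J.c + a - x))) lo hi (n + 1) with hx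
    have hsum : ∑ s ∈ Finset.Icc (n + 1) J.T, J.Vcap s
        = J.Vcap (n + 1) + ∑ s ∈ Finset.Icc (n + 1 + 1) J.T, J.Vcap s := by
      rw [show Finset.Icc (n + 1 + 1) J.T = Finset.Ioc (n + 1) J.T from Finset.Icc_add_one_left_eq_Ioc _ _,
        Finset.Icc_eq_cons_Ioc (show n + 1 ≤ J.T from hT), Finset.sum_cons]
    rcases le_total (J.Vcap (n + 1)) (J.GammaStar / J.c + lo (n + 1) - x) with hm | hm
    · rw [min_eq_left hm]
      have hkey := le_max_right (0:ℝ) (J.Vcap (n + 1))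
      rw [hsum] at ihn
      linarith
    · rw [min_eq_right hm]
      have hkey := le_max_right (0:ℝ) (J.GammaStar / J.c + lo (n + 1) - x)
      have hM := le_Mval (show 1 ≤ n + 1 by omega) hT
      have hhi : hi J.T ≤ hi (n + 1) := (scen_mono h (show 1 ≤ n + 1 by omega) hT le_rfl).2
      have hw := (h.2.2.1 (n + 1) (by omega) hT).2
      linarith

lemma pistar_scen_regret (hJ : J.IsValid) (hcap : J.dhi ≤ J.totalCap)
    {lo hi : ℕ → ℝ} {d : ℝ} (h : J.Scenario lo hi d) :
    J.hindsight d - J.profit (fun t a _ x => max 0 (min (J.Vcap t) (J.GammaStar / J.c + a - x))) lo hi d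
      ≤ J.GammaStar := by
  have hc := hJ.2.2.2.2.2.2.1
  have hcp := hJ.2.2.2.2.2.2.2.1
  have hp : 0 < J.p := hc.trans hcp
  set x := inv (fun t a _ x => max 0 (min (J.Vcap t) (J.GammaStar / J.c + a - x))) lo hi (J.T + 1) with hxdef
  have h1 : x ≤ lo J.T + J.GammaStar / J.c := pistar_claim1 hJ h J.T hJ.1 le_rfl
  have h2 : hi J.T + J.GammaStar / J.c - J.Mval ≤ x := by
    have := pistar_claim2 hJ hcap h J.T le_rfl
    rw [Finset.Icc_eq_empty (by omega)] at this
    simpa using this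
  have hmono := scen_mono h (le_rfl : 1 ≤ 1) hJ.1 le_rfl
  have hdhi : d ≤ J.dhi := le_trans h.2.2.2.2.2 (hmono.2.trans h.2.1)
  have hdlo : lo J.T ≤ d := h.2.2.2.2.1
  have hmint : min J.totalCap d = d := min_eq_right (hdhi.trans hcap)
  rw [hindsight, profit, hmint]
  rcases le_total d x with hdx | hdx
  · rw [min_eq_left hdx]
    have hgc : J.c * (J.GammaStar / J.c) = J.GammaStar := by
      field_simp
    nlinarith
  · rw [min_eq_right hdx]
    have heq : (J.p - J.c) * (J.Mval - J.GammaStar / J.c) = J.GammaStar := by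
      rw [gamma_eq hJ, gammaStar_eq]
      field_simp
      ring
    nlinarith [le_trans h.2.2.2.2.2 (le_refl (hi J.T))]
end RMOwP
namespace RMOwP

variable {J : RMOwP}

/-- Adversary's "high" scenario lower endpoints. -/
noncomputable def advLoH (J : RMOwP) (τ : ℕ) : ℕ → ℝ :=
  fun t => if t ≤ τ then J.dlo else J.dlo + J.Δ τ - J.Δ t

/-- Adversary's "high" scenario upper endpoints. -/
noncomputable def advHiH (J : RMOwP) (τ : ℕ) : ℕ → ℝ :=
  fun t => if t ≤ τ then J.dlo + J.Δ t else J.dlo + J.Δ τ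

/-- Adversary's "low" scenario upper endpoints. -/
noncomputable def advHiL (J : RMOwP) (τ : ℕ) : ℕ → ℝ :=
  fun t => if t ≤ τ then J.dlo + J.Δ t else J.dlo

lemma advH_scen (hJ : J.IsValid) {τ : ℕ} (hτ1 : 1 ≤ τ) (hτT : τ ≤ J.T) :
    J.Scenario (advLoH J τ) (advHiH J τ) (J.dlo + J.Δ τ) := by
  have hΔ := hJ.2.2.2.2.1
  have hΔτ : 0 ≤ J.Δ τ := hΔ τ hτ1 hτT
  refine ⟨?_, ?_, ?_, ?_, ?_, ?_⟩
  · simp [advLoH, hτ1]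
  · simp only [advHiH, if_pos hτ1]
    linarith [hJ.2.2.2.2.2.1]
  · intro t ht1 htT
    simp only [advLoH, advHiH]
    split_ifs with h
    · exact ⟨by linarith [hΔ t ht1 htT], by linarith⟩
    · exact ⟨by linarith [hΔ t ht1 htT], by linarith⟩
  · intro t ht2 htT
    obtain ⟨u, rfl⟩ : ∃ u, t = u + 1 := ⟨t - 1, by omega⟩
    have hu1 : 1 ≤ u := by omega
    have hΔu : J.Δ (u + 1) ≤ J.Δ u := hJ.2.2.2.1 u hu1 htT
    simp only [Nat.add_sub_cancel, advLoH, advHiH]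
    by_cases h1 : u + 1 ≤ τ
    · rw [if_pos h1, if_pos (by omega : u ≤ τ), if_pos h1, if_pos (by omega : u ≤ τ)]
      exact ⟨le_rfl, by linarith⟩
    · by_cases h2 : u ≤ τ
      · have huτ : u = τ := by omega
        subst huτ
        rw [if_neg h1, if_pos h2, if_neg h1, if_pos h2]
        exact ⟨by linarith, le_rfl⟩
      · rw [if_neg h1, if_neg h2, if_neg h1, if_neg h2]
        exact ⟨by linarith, le_rfl⟩
  · simp only [advLoH]
    split_ifs with hT
    · have : τ = J.T := by omega
      subst this
      linarith
    · linarith [hΔ J.T hJ.1 le_rfl]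
  · simp only [advHiH]
    split_ifs with hT
    · have : τ = J.T := by omega
      subst this
      exact le_rfl
    · exact le_rfl

lemma advL_scen (hJ : J.IsValid) {τ : ℕ} (hτ1 : 1 ≤ τ) (hτT : τ ≤ J.T) :
    J.Scenario (fun _ => J.dlo) (advHiL J τ) J.dlo := by
  have hΔ := hJ.2.2.2.2.1
  have hΔτ : 0 ≤ J.Δ τ := hΔ τ hτ1 hτT
  refine ⟨le_rfl, ?_, ?_, ?_, le_rfl, ?_⟩
  · simp only [advHiL, if_pos hτ1]
    linarith [hJ.2.2.2.2.2.1, hJ.2.2.1]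
  · intro t ht1 htT
    simp only [advHiL]
    split_ifs with h
    · exact ⟨by linarith [hΔ t ht1 htT], by linarith⟩
    · exact ⟨le_rfl, by simpa using hΔ t ht1 htT⟩
  · intro t ht2 htT
    obtain ⟨u, rfl⟩ : ∃ u, t = u + 1 := ⟨t - 1, by omega⟩
    have hu1 : 1 ≤ u := by omega
    have hΔu : J.Δ (u + 1) ≤ J.Δ u := hJ.2.2.2.1 u hu1 htT
    simp only [Nat.add_sub_cancel, advHiL]
    refine ⟨le_rfl, ?_⟩
    by_cases h1 : u + 1 ≤ τ
    · rw [if_pos h1, if_pos (by omega : u ≤ τ)]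
      linarith
    · by_cases h2 : u ≤ τ
      · have huτ : u = τ := by omega
        subst huτ
        rw [if_neg h1, if_pos h2]
        linarith
      · rw [if_neg h1, if_neg h2]
  · simp only [advHiL]
    split_ifs with hT
    · linarith [hΔ J.T hJ.1 le_rfl]
    · exact le_rfl

lemma adv_inv_eq (π : ℕ → ℝ → ℝ → ℝ → ℝ) {τ : ℕ} :
    inv π (fun _ => J.dlo) (advHiL J τ) (τ + 1) = inv π (advLoH J τ) (advHiH J τ) (τ + 1) := by
  refine inv_congr π (τ + 1) (fun s hs hst => ?_)
  have hsτ : s ≤ τ := by omega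
  constructor
  · simp [advLoH, hsτ]
  · simp [advHiL, advHiH, hsτ]

lemma regret_lower (hJ : J.IsValid) (hcap : J.dhi ≤ J.totalCap)
    {π : ℕ → ℝ → ℝ → ℝ → ℝ} (hπ : J.IsPolicy π) : J.GammaStar ≤ J.regret π := by
  have hc := hJ.2.2.2.2.2.2.1
  have hcp := hJ.2.2.2.2.2.2.2.1
  have hp : 0 < J.p := hc.trans hcp
  have hdlo0 : 0 ≤ J.dlo := hJ.2.1
  obtain ⟨τ, hτ1, hτT, hMeq⟩ := Mval_mem hJ
  have hbdd := regretSet_bddAbove hJ hπ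
  have scenH := advH_scen hJ hτ1 hτT
  have scenL := advL_scen hJ hτ1 hτT
  set x1 := inv π (advLoH J τ) (advHiH J τ) (τ + 1) with hx1
  set W := ∑ s ∈ Finset.Icc (τ + 1) J.T, J.Vcap s with hWdef
  -- demand in the high scenario, and its bound
  have hΔτ1 : J.Δ τ ≤ J.Δ 1 := delta_mono hJ le_rfl hτ1 hτT
  have hdhd : J.dlo + J.Δ τ ≤ J.dhi := by linarith [hJ.2.2.2.2.2.1]
  -- the low-scenario regret bound
  have hrL : J.c * (x1 - J.dlo) ≤
      J.hindsight J.dlo - J.profit π (fun _ => J.dlo) (advHiL J τ) J.dlo := by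
    rw [hindsight, profit]
    set xL := inv π (fun _ => J.dlo) (advHiL J τ) (J.T + 1) with hxL
    have hge : x1 ≤ xL := by
      rw [hx1, ← adv_inv_eq π, hxL]
      exact (inv_between hπ scenL hτT le_rfl).1
    rw [min_eq_right (le_trans hJ.2.2.1 hcap)]
    have hmin2 : min J.dlo xL ≤ J.dlo := min_le_left _ _
    nlinarith [mul_nonneg hp.le (sub_nonneg.2 hmin2), mul_nonneg hc.le (sub_nonneg.2 hge)]
  -- the high-scenario regret bound
  have hrH : (J.p - J.c) * (J.Mval - (x1 - J.dlo)) ≤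
      J.hindsight (J.dlo + J.Δ τ) - J.profit π (advLoH J τ) (advHiH J τ) (J.dlo + J.Δ τ) := by
    rw [hindsight, profit]
    set xH := inv π (advLoH J τ) (advHiH J τ) (J.T + 1) with hxH
    have hle : xH ≤ x1 + W := (inv_between hπ scenH hτT le_rfl).2
    rw [min_eq_right (hdhd.trans hcap), hMeq]
    rcases le_total xH (J.dlo + J.Δ τ) with hcase | hcase
    · rw [min_eq_right hcase]
      nlinarith [mul_nonneg (show (0:ℝ) ≤ J.p - J.c by linarith)
        (show (0:ℝ) ≤ x1 + W - xH by linarith)]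
    · rw [min_eq_left hcase]
      nlinarith [mul_nonneg hp.le (show (0:ℝ) ≤ xH - (J.dlo + J.Δ τ) by linarith),
        mul_nonneg (show (0:ℝ) ≤ J.p - J.c by linarith)
          (show (0:ℝ) ≤ x1 + W - xH by linarith)]
  rcases le_total ((J.p - J.c) / J.p * J.Mval) (x1 - J.dlo) with hy | hy
  · have h1 : J.GammaStar ≤ J.c * (x1 - J.dlo) := by
      calc J.GammaStar = J.c * (J.GammaStar / J.c) := by field_simp
        _ = J.c * ((J.p - J.c) / J.p * J.Mval) := by rw [gamma_eq hJ]
        _ ≤ J.c * (x1 - J.dlo) := mul_le_mul_of_nonneg_left hy hc.le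
    exact le_trans (h1.trans hrL)
      (le_csSup hbdd ⟨fun _ => J.dlo, advHiL J τ, J.dlo, scenL, rfl⟩)
  · have h1 : J.GammaStar ≤ (J.p - J.c) * (J.Mval - (x1 - J.dlo)) := by
      have heq : (J.p - J.c) * (J.Mval - J.GammaStar / J.c) = J.GammaStar := by
        rw [gamma_eq hJ, gammaStar_eq]
        field_simp
        ring
      have h2 := gamma_eq hJ
      have h3 : J.Mval - J.GammaStar / J.c ≤ J.Mval - (x1 - J.dlo) := by
        rw [h2]; linarith
      calc J.GammaStar = (J.p - J.c) * (J.Mval - J.GammaStar / J.c) := heq.symm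
        _ ≤ _ := mul_le_mul_of_nonneg_left h3 (by linarith)
    exact le_trans (h1.trans hrH)
      (le_csSup hbdd ⟨advLoH J τ, advHiH J τ, J.dlo + J.Δ τ, scenH, rfl⟩)

end RMOwP

/-- **Proposition (Optimal robust regret for RMOwP).** Assume `d̄₀ ≤ V_1 + … + V_T`.
Then (i) an ordering policy with robust regret at most `Γ` exists iff `Γ ≥ Γ*`, and (ii) the
explicit policy `π*_t([a,b],x) = max(0, min(V_t, Γ*/c + a − x))` is an ordering policy whose
robust regret equals `Γ*`. -/
theorem rmowp_optimal_regret (J : RMOwP) (hJ : J.IsValid) (hcap : J.dhi ≤ J.totalCap) :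
    (∀ Γ : ℝ, (∃ π, J.IsPolicy π ∧ J.regret π ≤ Γ) ↔ J.GammaStar ≤ Γ) ∧
    J.IsPolicy (fun t a _ x => max 0 (min (J.Vcap t) (J.GammaStar / J.c + a - x))) ∧
    J.regret (fun t a _ x => max 0 (min (J.Vcap t) (J.GammaStar / J.c + a - x)))
      = J.GammaStar := by
  have hpol := RMOwP.pistar_policy hJ
  have hub : J.regret (fun t a _ x => max 0 (min (J.Vcap t) (J.GammaStar / J.c + a - x)))
      ≤ J.GammaStar := by
    rw [RMOwP.regret]
    refine csSup_le ⟨_, fun _ => J.dlo, fun _ => J.dlo, J.dlo, RMOwP.scen_const hJ, rfl⟩ ?_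
    rintro r ⟨lo, hi, d, hs, rfl⟩
    exact RMOwP.pistar_scen_regret hJ hcap hs
  have heq : J.regret (fun t a _ x => max 0 (min (J.Vcap t) (J.GammaStar / J.c + a - x)))
      = J.GammaStar := le_antisymm hub (RMOwP.regret_lower hJ hcap hpol)
  exact ⟨fun Γ => ⟨fun ⟨π, hπ, hr⟩ => le_trans (RMOwP.regret_lower hJ hcap hπ) hr,
    fun hΓ => ⟨_, hpol, heq.le.trans hΓ⟩⟩, hpol, heq⟩
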